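/- arXiv:1806.01671 — 2 statements merged into one kernel-verified Lean document; each statement's English description precedes it below -/
import Mathlib

section
/- Let G be a group acting on a set M, and for a finite subset A ⊆ M let G_(A) denote the pointwise stabiliser of A in G. Suppose that for all finite subsets A, B ⊆ M with |A∖B| = |B∖A| = 1, the subgroup generated by G_(A) and G_(B) equals G_(A∩B). Then for all finite subsets A, B ⊆ M, the subgroup generated by G_(A) and G_(B) equals G_(A∩B). -/
/-!
Induct on `|A ∖ B| + |B ∖ A|`; the inclusion `G_(A) ⊔ G_(B) ≤ G_(A ∩ B)` is automatic and
the case `A ⊆ B` (or `B ⊆ A`) is trivial. Otherwise pick `a ∈ A ∖ B`, `b ∈ B ∖ A` and let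
`D = (B ∖ {b}) ∪ {a}`, so that `|B ∖ D| = |D ∖ B| = 1`. Then
`G_(A ∩ B) = G_(A) ⊔ G_(B ∖ {b}) = G_(A) ⊔ G_(B) ⊔ G_(D)` by induction and the base case,
and `G_(D) ≤ G_((A ∩ B) ∪ {a}) = G_(A) ⊔ G_(B ∪ {a}) ≤ G_(A) ⊔ G_(B)`, again by induction.
-/

/-- The pointwise stabiliser `G_(A)` of a finite subset `A ⊆ M` in a group `G`
acting on `M`. -/
def fixStab (G : Type*) {M : Type*} [Group G] [MulAction G M] (A : Finset M) :
    Subgroup G where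
  carrier := {g : G | ∀ a ∈ A, g • a = a}
  one_mem' := fun a _ => one_smul G a
  mul_mem' := by
    intro g h hg hh a ha
    rw [mul_smul, hh a ha, hg a ha]
  inv_mem' := by
    intro g hg a ha
    exact inv_smul_eq_iff.mpr (hg a ha).symm

open Finset

section Combinatorics

variable {α : Type*} [DecidableEq α] {A B : Finset α}

theorem card_sdiff_erase_add_card_erase_sdiff_lt {b : α} (hbB : b ∈ B) (hbA : b ∉ A) :
    #(A \ B.erase b) + #(B.erase b \ A) < #(A \ B) + #(B \ A) := by
  have hA : A \ B.erase b = A \ B := by grind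
  rw [hA, erase_sdiff_comm, card_erase_of_mem (mem_sdiff.mpr ⟨hbB, hbA⟩)]
  have : 0 < #(B \ A) := card_pos.mpr ⟨b, mem_sdiff.mpr ⟨hbB, hbA⟩⟩
  omega

theorem card_sdiff_insert_add_card_insert_sdiff_lt {a : α} (haA : a ∈ A) (haB : a ∉ B) :
    #(A \ insert a B) + #(insert a B \ A) < #(A \ B) + #(B \ A) := by
  rw [sdiff_insert, insert_sdiff_of_mem B haA, card_erase_of_mem (mem_sdiff.mpr ⟨haA, haB⟩)]
  have : 0 < #(A \ B) := card_pos.mpr ⟨a, mem_sdiff.mpr ⟨haA, haB⟩⟩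
  omega

end Combinatorics

section Stabilisers

variable {G M : Type*} [Group G] [MulAction G M]

theorem fixStab_antitone : Antitone (fixStab G : Finset M → Subgroup G) :=
  fun _ _ hAB _ hg a ha => hg a (hAB ha)

variable [DecidableEq M]

theorem sup_fixStab_le_fixStab_inter (A B : Finset M) :
    fixStab G A ⊔ fixStab G B ≤ fixStab G (A ∩ B) :=
  sup_le (fixStab_antitone inter_subset_left) (fixStab_antitone inter_subset_right)

theorem sup_fixStab_eq_of_subset {A B : Finset M} (hAB : A ⊆ B) :
    fixStab G A ⊔ fixStab G B = fixStab G (A ∩ B) := by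
  rw [inter_eq_left.mpr hAB, sup_eq_left]
  exact fixStab_antitone hAB

theorem sup_fixStab_eq_of_exchange {A B : Finset M} {a b : M}
    (haB : a ∉ B) (hbA : b ∉ A)
    (h_erase : fixStab G A ⊔ fixStab G (B.erase b) = fixStab G (A ∩ B.erase b))
    (h_insert : fixStab G A ⊔ fixStab G (insert a B) = fixStab G (A ∩ insert a B))
    (h_swap : fixStab G B ⊔ fixStab G (insert a (B.erase b)) =
      fixStab G (B ∩ insert a (B.erase b))) :
    fixStab G A ⊔ fixStab G B = fixStab G (A ∩ B) := by
  refine le_antisymm (sup_fixStab_le_fixStab_inter A B) ?_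
  have hD : fixStab G (insert a (B.erase b)) ≤ fixStab G A ⊔ fixStab G B :=
    calc fixStab G (insert a (B.erase b))
        _ ≤ fixStab G (A ∩ insert a B) := fixStab_antitone (by grind)
        _ = fixStab G A ⊔ fixStab G (insert a B) := h_insert.symm
        _ ≤ fixStab G A ⊔ fixStab G B :=
          sup_le_sup_left (fixStab_antitone (subset_insert a B)) _
  calc fixStab G (A ∩ B)
      _ = fixStab G A ⊔ fixStab G (B.erase b) := by
        rw [h_erase, inter_erase, erase_eq_of_notMem (notMem_mono inter_subset_left hbA)]
      _ = fixStab G A ⊔ (fixStab G B ⊔ fixStab G (insert a (B.erase b))) := by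
        rw [h_swap, inter_insert_of_notMem haB, inter_eq_right.mpr (erase_subset b B)]
      _ ≤ fixStab G A ⊔ fixStab G B := by
        rw [← sup_assoc]
        exact sup_le le_rfl hD

theorem sup_fixStab_eq_of_base_case
    (h : ∀ A B : Finset M, #(A \ B) = 1 → #(B \ A) = 1 →
      fixStab G A ⊔ fixStab G B = fixStab G (A ∩ B))
    (A B : Finset M) : fixStab G A ⊔ fixStab G B = fixStab G (A ∩ B) := by
  by_cases hAB : A ⊆ B
  · exact sup_fixStab_eq_of_subset hAB
  by_cases hBA : B ⊆ A
  · rw [sup_comm, inter_comm]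
    exact sup_fixStab_eq_of_subset hBA
  obtain ⟨a, haA, haB⟩ := not_subset.mp hAB
  obtain ⟨b, hbB, hbA⟩ := not_subset.mp hBA
  have hBD : B \ insert a (B.erase b) = {b} := by grind
  have hDB : insert a (B.erase b) \ B = {a} := by grind
  exact sup_fixStab_eq_of_exchange haB hbA
    (sup_fixStab_eq_of_base_case h A (B.erase b))
    (sup_fixStab_eq_of_base_case h A (insert a B))
    (h B _ (by rw [hBD, card_singleton]) (by rw [hDB, card_singleton]))
termination_by #(A \ B) + #(B \ A)
decreasing_by
  · exact card_sdiff_erase_add_card_erase_sdiff_lt hbB hbA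
  · exact card_sdiff_insert_add_card_insert_sdiff_lt haA haB

end Stabilisers

/-- If the subgroup generated by the pointwise stabilisers `G_(A)` and `G_(B)` equals
`G_(A ∩ B)` whenever `|A ∖ B| = |B ∖ A| = 1`, then the same holds for all finite
subsets `A, B` of `M`. -/
theorem intersection_of_stabilisers_of_base_case {G M : Type*} [Group G] [MulAction G M]
    [DecidableEq M]
    (h : ∀ A B : Finset M, (A \ B).card = 1 → (B \ A).card = 1 →
      fixStab G A ⊔ fixStab G B = fixStab G (A ∩ B)) :
    ∀ A B : Finset M, fixStab G A ⊔ fixStab G B = fixStab G (A ∩ B) :=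
  sup_fixStab_eq_of_base_case h
end

section
/- Let S be a set of triangles satisfying Condition 2 with respect to L' = {R_1, R_2} (ordered R_1 > R_2). Then for all A, B, C ∈ Forb_c(S) with B ⊆ A and B ⊆ C, if A ⊗_B C (with respect to the order R_1 > R_2) is defined then A ⊗_B C ∈ Forb_c(S). In particular, if moreover Forb_c(S) is a semi-free amalgamation class with set of solutions L', then Forb_c(S) is a prioritised semi-free amalgamation class with respect to the order R_1 > R_2. -/
namespace Paper

variable {L M : Type}

/-- The structure with colouring `r` embeds no triangle from `S`
(triangles identified with the multiset of their three edge colours). -/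
def Avoids (r : M → M → L) (S : Set (Multiset L)) : Prop :=
  ∀ a b c : M, a ≠ b → a ≠ c → b ≠ c → ({r a b, r a c, r b c} : Multiset L) ∉ S

/-- The substructure on `T` embeds no triangle from `S`. -/
def AvoidsOn (r : M → M → L) (T : Set M) (S : Set (Multiset L)) : Prop :=
  ∀ a ∈ T, ∀ b ∈ T, ∀ c ∈ T, a ≠ b → a ≠ c → b ≠ c →
    ({r a b, r a c, r b c} : Multiset L) ∉ S

/-- Colouring the pair `(a,c)` by `R` creates no forbidden triangle over a point of `B`. -/
def Compatible (r : M → M → L) (S : Set (Multiset L)) (B : Set M) (a c : M) (R : L) : Prop :=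
  ∀ b ∈ B, ({r a b, r b c, R} : Multiset L) ∉ S

/-- `R` is the greatest relation of `L'` (in the priority order `le`) whose use on the
pair `(a,c)` creates no forbidden triangle over `B`. -/
def PriorityColour (le : L → L → Prop) (r : M → M → L) (S : Set (Multiset L)) (L' : Set L)
    (B : Set M) (a c : M) (R : L) : Prop :=
  (R ∈ L' ∧ Compatible r S B a c R) ∧
    ∀ R' : L, R' ∈ L' → Compatible r S B a c R' → le R' R

/-- `A ⫫_B C`: the substructure on `A ∪ B ∪ C` is the prioritised semi-free amalgam
`(A ∪ B) ⊗_B (B ∪ C)`. -/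
def Indep (le : L → L → Prop) (r : M → M → L) (S : Set (Multiset L)) (L' : Set L)
    (A B C : Set M) : Prop :=
  A ∩ C ⊆ B ∧ ∀ a ∈ A, a ∉ B → ∀ c ∈ C, c ∉ B → PriorityColour le r S L' B a c (r a c)

/-- Whenever the prioritised semi-free amalgam `A ⊗_B C` of members of `Forb_c(S)` is
defined, it lies in `Forb_c(S)`.  (The amalgam is represented by a finite vertex type
`V = A ∪ C` with `B = A ∩ C`, whose cross edges are coloured by the priority rule.) -/
def AmalgamAvoids (le : L → L → Prop) (S : Set (Multiset L)) (L' : Set L) : Prop :=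
  ∀ (V : Type) [Fintype V] (rr : V → V → L) (A C : Set V),
    (∀ a b, rr a b = rr b a) → A ∪ C = Set.univ →
    AvoidsOn rr A S → AvoidsOn rr C S →
    (∀ a ∈ A \ C, ∀ c ∈ C \ A, PriorityColour le rr S L' (A ∩ C) a c (rr a c)) →
    Avoids rr S

/-- The prioritised semi-free amalgam of members of `Forb_c(S)` is always defined. -/
def AmalgamDefined (le : L → L → Prop) (S : Set (Multiset L)) (L' : Set L) : Prop :=
  ∀ (V : Type) [Fintype V] (rr : V → V → L) (A C : Set V),
    (∀ a b, rr a b = rr b a) → A ∪ C = Set.univ →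
    AvoidsOn rr A S → AvoidsOn rr C S →
    ∀ a ∈ A \ C, ∀ c ∈ C \ A, ∃ R : L, PriorityColour le rr S L' (A ∩ C) a c R

/-- `Forb_c(S)` is a prioritised semi-free amalgamation class w.r.t. the order `le` on `L'`. -/
def IsPrioritisedSemiFree (le : L → L → Prop) (S : Set (Multiset L)) (L' : Set L) : Prop :=
  AmalgamDefined le S L' ∧ AmalgamAvoids le S L'

/-- `Forb_c(S)` is a semi-free amalgamation class with set of solutions `L'`. -/
def IsSemiFree (S : Set (Multiset L)) (L' : Set L) : Prop :=
  ∀ (V : Type) [Fintype V] (rr : V → V → L) (A C : Set V),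
    (∀ a b, rr a b = rr b a) → A ∪ C = Set.univ →
    AvoidsOn rr A S → AvoidsOn rr C S →
    ∃ rr' : V → V → L, (∀ a b, rr' a b = rr' b a) ∧ Avoids rr' S ∧
      (∀ a ∈ A, ∀ b ∈ A, rr' a b = rr a b) ∧
      (∀ a ∈ C, ∀ b ∈ C, rr' a b = rr a b) ∧
      (∀ a ∈ A \ C, ∀ c ∈ C \ A, rr' a c ∈ L')

/-- `Forb_c(S)` has the amalgamation property (with joint embedding as the case
of empty intersection); it is then an amalgamation class. -/
def HasAmalgamation (S : Set (Multiset L)) : Prop :=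
  ∀ (V : Type) [Fintype V] (rr : V → V → L) (A C : Set V),
    (∀ a b, rr a b = rr b a) → A ∪ C = Set.univ →
    AvoidsOn rr A S → AvoidsOn rr C S →
    ∃ rr' : V → V → L, (∀ a b, rr' a b = rr' b a) ∧ Avoids rr' S ∧
      (∀ a ∈ A, ∀ b ∈ A, rr' a b = rr a b) ∧
      (∀ a ∈ C, ∀ b ∈ C, rr' a b = rr a b)

/-- `(M, r)` is the Fraïssé limit of `Forb_c(S)`: a countable structure whose complete
edge-colouring avoids `S`, which is homogeneous, and which satisfies the extension
property with respect to members of `Forb_c(S)`. -/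
structure IsLimit (S : Set (Multiset L)) (r : M → M → L) : Prop where
  countable : Countable M
  symm : ∀ a b : M, r a b = r b a
  avoids : Avoids r S
  extension : ∀ (n : ℕ) (c : Fin n → Fin n → L), (∀ i j, c i j = c j i) →
    Avoids c S → ∀ (A : Finset (Fin n)) (f : Fin n → M), Set.InjOn f ↑A →
    (∀ i ∈ A, ∀ j ∈ A, i ≠ j → r (f i) (f j) = c i j) →
    ∃ g : Fin n ↪ M, (∀ i ∈ A, g i = f i) ∧ ∀ i j : Fin n, i ≠ j → r (g i) (g j) = c i j
  homogeneous : ∀ (A : Finset M) (f : M → M), Set.InjOn f ↑A →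
    (∀ a ∈ A, ∀ b ∈ A, r (f a) (f b) = r a b) →
    ∃ g : Equiv.Perm M, (∀ x y, r (g x) (g y) = r x y) ∧ ∀ a ∈ A, g a = f a

/-- The automorphism group of the coloured structure `(M, r)`, as a subgroup of `Perm M`. -/
def aut (r : M → M → L) : Subgroup (Equiv.Perm M) where
  carrier := {g : Equiv.Perm M | ∀ a b, r (g a) (g b) = r a b}
  one_mem' := fun _ _ => rfl
  mul_mem' := by
    intro g h hg hh a b
    have : r (g (h a)) (g (h b)) = r a b := (hg (h a) (h b)).trans (hh a b)
    simpa [Equiv.Perm.mul_apply] using this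
  inv_mem' := by
    intro g hg a b
    have := hg (g⁻¹ a) (g⁻¹ b)
    simpa using this.symm

/-- The pointwise stabiliser `G_(X)` of `X` inside `Aut(M, r)`. -/
def pstab (r : M → M → L) (X : Set M) : Subgroup (aut r) where
  carrier := {g | ∀ x ∈ X, (g : Equiv.Perm M) x = x}
  one_mem' := fun _ _ => rfl
  mul_mem' := by
    intro g h hg hh x hx
    have : (g : Equiv.Perm M) ((h : Equiv.Perm M) x) = x := by rw [hh x hx, hg x hx]
    simpa [Equiv.Perm.mul_apply] using this
  inv_mem' := by
    intro g hg x hx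
    have := hg x hx
    simp only [Subgroup.coe_inv]
    conv_lhs => rw [← this]
    simp

/-- The 1-type of `a` over `X`: its orbit under the pointwise stabiliser of `X`. -/
def typeOf (r : M → M → L) (X : Set M) (a : M) : Set M :=
  {b | ∃ g : Equiv.Perm M, g ∈ aut r ∧ (∀ x ∈ X, g x = x) ∧ g a = b}

/-- Two `n`-tuples have the same type over `X`: they lie in the same orbit under the
pointwise stabiliser of `X`. -/
def SameTypeFn (r : M → M → L) (X : Set M) {n : ℕ} (a b : Fin n → M) : Prop :=
  ∃ g : Equiv.Perm M, g ∈ aut r ∧ (∀ x ∈ X, g x = x) ∧ ∀ i, g (a i) = b i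

/-- `f` moves almost maximally: every 1-type over every finite set `X` has a
realisation `b` with `b ⫫_X f(b)`. -/
def MovesAlmostMaximally (le : L → L → Prop) (r : M → M → L) (S : Set (Multiset L))
    (L' : Set L) (f : Equiv.Perm M) : Prop :=
  ∀ (X : Finset M) (a : M), ∃ b ∈ typeOf r ↑X a, Indep le r S L' {b} ↑X {f b}

/-- The commutator `[x, y] = x⁻¹y⁻¹xy`. -/
def Comm {G : Type*} [Group G] (x y : G) : G := x⁻¹ * y⁻¹ * x * y

/-- `le` is a linear order on the subset `L'`. -/
def IsLinearOn (le : L → L → Prop) (L' : Set L) : Prop :=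
  (∀ a ∈ L', le a a) ∧
  (∀ a ∈ L', ∀ b ∈ L', ∀ c ∈ L', le a b → le b c → le a c) ∧
  (∀ a ∈ L', ∀ b ∈ L', le a b → le b a → a = b) ∧
  (∀ a ∈ L', ∀ b ∈ L', le a b ∨ le b a)

/-- `R1 > R2` are the two greatest relations of `L'` in the order `le`. -/
def TwoGreatest (le : L → L → Prop) (L' : Set L) (R1 R2 : L) : Prop :=
  R1 ∈ L' ∧ R2 ∈ L' ∧ R2 ≠ R1 ∧ le R2 R1 ∧
    (∀ R ∈ L', le R R1) ∧ ∀ R ∈ L', R ≠ R1 → le R R2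

/-- Condition A (i): no triangle of `S` contains two occurrences of `R1`,
or an `R1` together with an `R2`. -/
def CondA1 (S : Set (Multiset L)) (R1 R2 : L) : Prop :=
  ∀ t ∈ S, ¬ (({R1, R1} : Multiset L) ≤ t) ∧ ¬ (({R1, R2} : Multiset L) ≤ t)

/-- Condition A (ii): if `a ⫫_{{b} ∪ B} c` and `r(a,b) ∈ L'` then `a ⫫_B c`. -/
def CondA2 (le : L → L → Prop) (r : M → M → L) (S : Set (Multiset L)) (L' : Set L) : Prop :=
  ∀ (a b c : M) (B : Finset M), r a b ∈ L' →
    Indep le r S L' {a} (insert b ↑B) {c} → Indep le r S L' {a} ↑B {c}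

/-- Condition 1: `S` contains no triangle having two of its three edges in `L'`. -/
def Cond1 (S : Set (Multiset L)) (L' : Set L) : Prop :=
  ∀ t ∈ S, ∀ x ∈ L', ∀ y ∈ L', ¬ (({x, y} : Multiset L) ≤ t)

/-- Condition 2 with respect to `L' = {R1, R2}` (ordered `R1 > R2`) and the subsets
`Lst = L*` and `Lhat = L̂`. -/
def Cond2 (S : Set (Multiset L)) (R1 R2 : L) (Lst Lhat : Set L) : Prop :=
  R1 ≠ R2 ∧ R1 ∉ Lst ∧ R2 ∉ Lst ∧ R1 ∉ Lhat ∧ R2 ∉ Lhat ∧ (∀ x ∈ Lst, x ∉ Lhat) ∧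
  (∀ R' : L, R' ∉ Lhat → R' ≠ R2 → ∀ Ra ∈ Lst, ∀ Rb ∈ Lst,
    ({R', Ra, Rb} : Multiset L) ∈ S) ∧
  (∀ Ra ∈ Lst, ({R2, R2, Ra} : Multiset L) ∈ S) ∧
  (∀ Rh ∈ Lhat, ∀ Ra ∈ Lst, ({R2, Rh, Ra} : Multiset L) ∈ S) ∧
  (∀ t ∈ S, R1 ∈ t → ∃ Ra ∈ Lst, ∃ Rb ∈ Lst, t = ({R1, Ra, Rb} : Multiset L)) ∧
  (∀ t ∈ S, ({R2, R2} : Multiset L) ≤ t → ∃ Ra ∈ Lst, t = ({R2, R2, Ra} : Multiset L))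

/-! A forbidden triangle of the amalgam has a vertex `x ∈ A \ C` and a vertex
`z ∈ C \ A`. If its third vertex `y` lies in `B = A ∩ C`, the priority colour of `xz` was chosen
to avoid it. Otherwise, say `y ∈ A \ C`, the triangle has two cross edges, so by Condition 2 it
is `R₂R₂R*` with `r(x,y) ∈ L*`. That `xz` did not get colour `R₁` is witnessed by some
`b ∈ B` with `r(x,b), r(b,z) ∈ L*`, and since `yz` did get colour `R₂`, `r(y,b)` is neither `R₂`
nor in `L̂`. Hence the triangle `xyb` of `A` is `R'R*R*` with `R' ∉ L̂ ∪ {R₂}`, which is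
forbidden. The priority colour exists whenever a semi-free amalgam does, because that amalgam's
cross colour is already a compatible element of `{R₁, R₂}`. -/

theorem _root_.Multiset.triangle_swap_left {α : Type*} (x y z : α) :
    ({x, y, z} : Multiset α) = {y, x, z} :=
  Multiset.cons_swap x y _

theorem _root_.Multiset.triangle_swap_right {α : Type*} (x y z : α) :
    ({x, y, z} : Multiset α) = {x, z, y} :=
  congrArg (insert x) (Multiset.pair_comm y z)

theorem _root_.Multiset.triangle_rotate {α : Type*} (x y z : α) :
    ({x, y, z} : Multiset α) = {y, z, x} :=
  (Multiset.cons_swap x y _).trans (congrArg (insert y) (Multiset.pair_comm x z))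

namespace Cond2

variable {S : Set (Multiset L)} {R1 R2 : L} {Lst Lhat : Set L}

theorem mem_of_R1_mem (hS : Cond2 S R1 R2 Lst Lhat) {x y : L}
    (h : ({x, y, R1} : Multiset L) ∈ S) : x ∈ Lst ∧ y ∈ Lst := by
  obtain ⟨-, -, -, -, -, -, -, -, -, hR1_tri, -⟩ := hS
  obtain ⟨Ra, hRa, Rb, hRb, ht⟩ := hR1_tri _ h (by simp)
  rw [Multiset.triangle_rotate, Multiset.triangle_rotate y] at ht
  have hxy : ({x, y} : Multiset L) = {Ra, Rb} := (Multiset.cons_inj_right R1).mp ht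
  have hLst : ∀ t ∈ ({x, y} : Multiset L), t ∈ Lst := by
    rw [hxy]
    simpa using ⟨hRa, hRb⟩
  exact ⟨hLst x (by simp), hLst y (by simp)⟩

theorem eq_R2_of_two_mem_pair (hS : Cond2 S R1 R2 Lst Lhat) {u v w : L}
    (h : ({u, v, w} : Multiset L) ∈ S) (hu : u ∈ ({R1, R2} : Set L))
    (hw : w ∈ ({R1, R2} : Set L)) : u = R2 ∧ w = R2 ∧ v ∈ Lst := by
  have hL'Lst : ∀ t ∈ ({R1, R2} : Set L), t ∉ Lst := by
    simpa using ⟨hS.2.1, hS.2.2.1⟩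
  have hwR2 : w = R2 := by
    rcases hw with rfl | rfl
    · exact absurd (hS.mem_of_R1_mem h).1 (hL'Lst u hu)
    · rfl
  have huR2 : u = R2 := by
    rcases hu with rfl | rfl
    · rw [Multiset.triangle_rotate] at h
      exact absurd (hS.mem_of_R1_mem h).2 (hL'Lst w hw)
    · rfl
  subst huR2 hwR2
  rw [Multiset.triangle_swap_right] at h
  obtain ⟨-, -, -, -, -, -, -, -, -, -, hR2R2_tri⟩ := hS
  obtain ⟨Ra, hRa, ht⟩ := hR2R2_tri _ h (by simp)
  have hv : ({v} : Multiset L) = {Ra} :=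
    (Multiset.cons_inj_right _).mp ((Multiset.cons_inj_right _).mp ht)
  exact ⟨rfl, rfl, Multiset.singleton_inj.mp hv ▸ hRa⟩

theorem mem_of_R2_not_mem (hS : Cond2 S R1 R2 Lst Lhat) {R' Rs : L}
    (h : ({R', Rs, R2} : Multiset L) ∉ S) (hRs : Rs ∈ Lst) {Ra Rb : L} (hRa : Ra ∈ Lst)
    (hRb : Rb ∈ Lst) : ({R', Ra, Rb} : Multiset L) ∈ S := by
  obtain ⟨-, -, -, -, -, -, hStarStar, hR2R2, hR2Hat, -, -⟩ := hS
  refine hStarStar R' (fun hR' => h ?_) (fun hR' => h ?_) Ra hRa Rb hRb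
  · rw [Multiset.triangle_rotate, Multiset.triangle_rotate Rs]
    exact hR2Hat R' hR' Rs hRs
  · rw [hR', Multiset.triangle_swap_right]
    exact hR2R2 Rs hRs

end Cond2

/-- `A ∪ C` is the prioritised semi-free amalgam `A ⊗_{A ∩ C} C`. -/
def IsPriorityAmalgam (le : L → L → Prop) (r : M → M → L) (S : Set (Multiset L)) (L' : Set L)
    (A C : Set M) : Prop :=
  ∀ a ∈ A \ C, ∀ c ∈ C \ A, PriorityColour le r S L' (A ∩ C) a c (r a c)

section Amalgam

variable {le : L → L → Prop} {r : M → M → L} {S : Set (Multiset L)} {L' : Set L} {B : Set M}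
  {a c : M} {R : L}

theorem Compatible.symm (hr : ∀ x y, r x y = r y x) (h : Compatible r S B a c R) :
    Compatible r S B c a R := fun b hb hm =>
  h b hb (by rwa [hr a b, hr b c, Multiset.triangle_swap_left])

theorem PriorityColour.symm (hr : ∀ x y, r x y = r y x) (h : PriorityColour le r S L' B a c R) :
    PriorityColour le r S L' B c a R :=
  ⟨⟨h.1.1, h.1.2.symm hr⟩, fun R' hR' hc => h.2 R' hR' (hc.symm hr)⟩

theorem IsPriorityAmalgam.symm (hr : ∀ x y, r x y = r y x) {A C : Set M}
    (h : IsPriorityAmalgam le r S L' A C) : IsPriorityAmalgam le r S L' C A := fun c hc a ha => by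
  rw [Set.inter_comm, hr c a]
  exact (h a ha c hc).symm hr

variable {R1 R2 : L} {Lst Lhat : Set L} {A C : Set M}

theorem IsPriorityAmalgam.triangle_not_mem_of_two_left (hS : Cond2 S R1 R2 Lst Lhat)
    (hlt : ¬ le R1 R2) (hA : AvoidsOn r A S) (h : IsPriorityAmalgam le r S {R1, R2} A C)
    {x y z : M} (hx : x ∈ A \ C) (hy : y ∈ A \ C) (hz : z ∈ C \ A) (hxy : x ≠ y) :
    ({r x y, r x z, r y z} : Multiset L) ∉ S := by
  intro hxyz
  have Pxz := h x hx z hz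
  have Pyz := h y hy z hz
  rw [Multiset.triangle_swap_left] at hxyz
  obtain ⟨hxz, hyz, hxyLst⟩ := hS.eq_R2_of_two_mem_pair hxyz Pxz.1.1 Pyz.1.1
  obtain ⟨b, hb, hbS⟩ : ∃ b ∈ A ∩ C, ({r x b, r b z, R1} : Multiset L) ∈ S := by
    by_contra! hno
    exact hlt (hxz ▸ Pxz.2 R1 (by simp) hno)
  obtain ⟨hxb, hbz⟩ := hS.mem_of_R1_mem hbS
  have hxyb : ({r y b, r x y, r x b} : Multiset L) ∈ S :=
    hS.mem_of_R2_not_mem (hyz ▸ Pyz.1.2 b hb) hbz hxyLst hxb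
  rw [Multiset.triangle_rotate] at hxyb
  exact hA x hx.1 y hy.1 b hb.1 hxy (fun h => hx.2 (h ▸ hb.2)) (fun h => hy.2 (h ▸ hb.2)) hxyb

theorem IsPriorityAmalgam.triangle_not_mem (hS : Cond2 S R1 R2 Lst Lhat) (hlt : ¬ le R1 R2)
    (hr : ∀ x y, r x y = r y x) (hA : AvoidsOn r A S) (hC : AvoidsOn r C S)
    (h : IsPriorityAmalgam le r S {R1, R2} A C) {x y z : M} (hx : x ∈ A \ C) (hy : y ∈ A ∪ C)
    (hz : z ∈ C \ A) (hxy : x ≠ y) (hyz : y ≠ z) :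
    ({r x y, r x z, r y z} : Multiset L) ∉ S := by
  by_cases hyA : y ∈ A
  · by_cases hyC : y ∈ C
    · rw [Multiset.triangle_swap_right]
      exact (h x hx z hz).1.2 y ⟨hyA, hyC⟩
    · exact h.triangle_not_mem_of_two_left hS hlt hA hx ⟨hyA, hyC⟩ hz hxy
  · intro hxyz
    refine (h.symm hr).triangle_not_mem_of_two_left hS hlt hC hz ⟨hy.resolve_left hyA, hyA⟩ hx
      hyz.symm ?_
    rwa [hr z y, hr z x, hr y x, ← Multiset.triangle_swap_left, ← Multiset.triangle_rotate]

theorem amalgamAvoids_of_cond2 (hS : Cond2 S R1 R2 Lst Lhat) (hlt : ¬ le R1 R2) :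
    AmalgamAvoids le S {R1, R2} := by
  intro V _ r A C hr hU hA hC hcross a b c hab hac hbc habc
  have hmem : ∀ x, x ∈ A ∪ C := fun x => hU ▸ Set.mem_univ x
  have hcross : IsPriorityAmalgam le r S {R1, R2} A C := hcross
  have key : ∀ x y z, x ≠ y → y ≠ z → (x ∈ A \ C ∧ z ∈ C \ A ∨ x ∈ C \ A ∧ z ∈ A \ C) →
      ({r x y, r x z, r y z} : Multiset L) ∉ S := by
    rintro x y z hxy hyz (⟨hx, hz⟩ | ⟨hx, hz⟩)
    · exact hcross.triangle_not_mem hS hlt hr hA hC hx (hmem y) hz hxy hyz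
    · exact (hcross.symm hr).triangle_not_mem hS hlt hr hC hA hx (Set.union_comm A C ▸ hmem y)
        hz hxy hyz
  by_cases hsep_ac : a ∈ A \ C ∧ c ∈ C \ A ∨ a ∈ C \ A ∧ c ∈ A \ C
  · exact key a b c hab hbc hsep_ac habc
  by_cases hsep_ab : a ∈ A \ C ∧ b ∈ C \ A ∨ a ∈ C \ A ∧ b ∈ A \ C
  · exact key a c b hac hbc.symm hsep_ab (by rwa [hr c b, Multiset.triangle_swap_left])
  by_cases hsep_bc : b ∈ A \ C ∧ c ∈ C \ A ∨ b ∈ C \ A ∧ c ∈ A \ C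
  · exact key b a c hab.symm hac hsep_bc (by rwa [hr b a, Multiset.triangle_swap_right])
  have hside : (a ∈ A ∧ b ∈ A ∧ c ∈ A) ∨ (a ∈ C ∧ b ∈ C ∧ c ∈ C) := by
    have ha := hmem a
    have hb := hmem b
    have hc := hmem c
    simp only [Set.mem_sdiff, Set.mem_union] at ha hb hc hsep_ac hsep_ab hsep_bc
    grind
  rcases hside with ⟨ha, hb, hc⟩ | ⟨ha, hb, hc⟩
  · exact hA a ha b hb c hc hab hac hbc habc
  · exact hC a ha b hb c hc hab hac hbc habc

theorem compatible_of_avoids {r' : M → M → L} (hav : Avoids r' S)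
    (hA : ∀ x ∈ A, ∀ y ∈ A, r' x y = r x y) (hC : ∀ x ∈ C, ∀ y ∈ C, r' x y = r x y)
    (ha : a ∈ A \ C) (hc : c ∈ C \ A) : Compatible r S (A ∩ C) a c (r' a c) := by
  intro b hb hm
  refine hav a b c (fun h => ha.2 (h ▸ hb.2)) (fun h => hc.2 (h ▸ ha.1))
    (fun h => hc.2 (h ▸ hb.1)) ?_
  rwa [hA a ha.1 b hb.1, hC b hb.2 c hc.1, Multiset.triangle_swap_right]

theorem exists_priorityColour_pair (hrefl : ∀ R ∈ ({R1, R2} : Set L), le R R) (hord : le R2 R1)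
    (hR : R ∈ ({R1, R2} : Set L)) (hc : Compatible r S B a c R) :
    ∃ R, PriorityColour le r S {R1, R2} B a c R := by
  by_cases h1 : Compatible r S B a c R1
  · refine ⟨R1, ⟨by simp, h1⟩, ?_⟩
    rintro R' (rfl | rfl) -
    · exact hrefl _ (by simp)
    · exact hord
  · have h2 : Compatible r S B a c R2 := by
      rcases hR with rfl | rfl
      exacts [absurd hc h1, hc]
    refine ⟨R2, ⟨by simp, h2⟩, ?_⟩
    rintro R' (rfl | rfl) hR'
    exacts [absurd hR' h1, hrefl _ (by simp)]

theorem amalgamDefined_of_isSemiFree (hrefl : ∀ R ∈ ({R1, R2} : Set L), le R R)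
    (hord : le R2 R1) (h : IsSemiFree S {R1, R2}) : AmalgamDefined le S {R1, R2} := by
  intro V _ r A C hr hU hA hC a ha c hc
  obtain ⟨r', -, hav, hAr, hCr, hL'⟩ := h V r A C hr hU hA hC
  exact exists_priorityColour_pair hrefl hord (hL' a ha c hc)
    (compatible_of_avoids hav hAr hCr ha hc)

end Amalgam

theorem cond2_prioritised_semi_free_general {L : Type}
    (S : Set (Multiset L)) (R1 R2 : L) (Lst Lhat : Set L)
    (h2 : Cond2 S R1 R2 Lst Lhat)
    (le : L → L → Prop) (hle : IsLinearOn le {R1, R2}) (hord : le R2 R1) :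
    AmalgamAvoids le S {R1, R2} ∧
      (IsSemiFree S {R1, R2} → IsPrioritisedSemiFree le S {R1, R2}) := by
  have hlt : ¬ le R1 R2 := fun h => h2.1 (hle.2.2.1 R1 (by simp) R2 (by simp) h hord)
  have hAv : AmalgamAvoids le S {R1, R2} := amalgamAvoids_of_cond2 h2 hlt
  exact ⟨hAv, fun hsf => ⟨amalgamDefined_of_isSemiFree hle.1 hord hsf, hAv⟩⟩

/-- **Lemma.** If `S` satisfies Condition 2 with respect to `L' = {R1, R2}` (ordered
`R1 > R2`), then the prioritised semi-free amalgam of members of `Forb_c(S)` with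
respect to this order, when defined, lies in `Forb_c(S)`; in particular, if moreover
`Forb_c(S)` is a semi-free amalgamation class with set of solutions `{R1, R2}`, then
`Forb_c(S)` is a prioritised semi-free amalgamation class with respect to
`R1 > R2`. -/
theorem cond2_prioritised_semi_free {L : Type}
    (S : Set (Multiset L)) (R1 R2 : L) (Lst Lhat : Set L)
    (h2 : Cond2 S R1 R2 Lst Lhat)
    (hL' : ({R1, R2} : Set L) ≠ Set.univ)
    (le : L → L → Prop) (hle : IsLinearOn le {R1, R2}) (hord : le R2 R1) :
    AmalgamAvoids le S {R1, R2} ∧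
      (IsSemiFree S {R1, R2} → IsPrioritisedSemiFree le S {R1, R2}) :=
  cond2_prioritised_semi_free_general S R1 R2 Lst Lhat h2 le hle hord

end Paper
end
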